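/- The sextonion subspace S is closed under the Zorn product: if x, y ∈ S then x·y ∈ S. Hence S, which contains the unit 1 = (1,0,0,1), is a 6-dimensional unital (non-associative) ℂ-subalgebra of Z, realizing the complex sextonions. -/

import Mathlib

open Matrix

/-- 3-component complex vectors. -/
abbrev V3 := Fin 3 → ℂ

/-- The standard cross product on ℂ³. -/
def cross (A B : V3) : V3 := crossProduct A B

/-- The Zorn vector-matrix algebra over ℂ: elements x = (α⁺, A⁺, A⁻, α⁻). -/
abbrev Zorn := ℂ × V3 × V3 × ℂ

/-- The Zorn product
x·y = (α⁺β⁺ − ⟨A⁺,B⁻⟩, α⁺B⁺ + β⁻A⁺ + A⁻×B⁻, β⁺A⁻ + α⁻B⁻ + A⁺×B⁺, α⁻β⁻ − ⟨A⁻,B⁺⟩). -/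
noncomputable def zmul (x y : Zorn) : Zorn :=
  ( x.1 * y.1 - x.2.1 ⬝ᵥ y.2.2.1,
    x.1 • y.2.1 + y.2.2.2 • x.2.1 + cross x.2.2.1 y.2.2.1,
    y.1 • x.2.2.1 + x.2.2.2 • y.2.2.1 + cross x.2.1 y.2.1,
    x.2.2.2 * y.2.2.2 - x.2.2.1 ⬝ᵥ y.2.1 )

/-- The unit 1 = (1,0,0,1) of the Zorn algebra. -/
noncomputable def zunit : Zorn := (1, 0, 0, 1)

/-- Membership in the sextonion subspace S : A⁺₃ = 0 and A⁻₂ = 0. -/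
def inS (x : Zorn) : Prop := x.2.1 2 = 0 ∧ x.2.2.1 1 = 0

/-- The sextonion subspace S as a ℂ-submodule of the Zorn algebra. -/
noncomputable def Ssub : Submodule ℂ Zorn where
  carrier := {x | inS x}
  add_mem' := by
    rintro x y ⟨hx1, hx2⟩ ⟨hy1, hy2⟩
    exact ⟨by simp [inS, Prod.fst_add, Prod.snd_add, Pi.add_apply, hx1, hy1],
           by simp [inS, Prod.fst_add, Prod.snd_add, Pi.add_apply, hx2, hy2]⟩
  zero_mem' := ⟨rfl, rfl⟩
  smul_mem' := by
    rintro c x ⟨hx1, hx2⟩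
    exact ⟨by simp [inS, Prod.smul_fst, Prod.smul_snd, Pi.smul_apply, hx1],
           by simp [inS, Prod.smul_fst, Prod.smul_snd, Pi.smul_apply, hx2]⟩

/-- ρ⁺ = (1,0,0,0). -/
noncomputable def rhoP : Zorn := (1, 0, 0, 0)
/-- ρ⁻ = (0,0,0,1). -/
noncomputable def rhoM : Zorn := (0, 0, 0, 1)
/-- ε_k⁺ = (0, e_k, 0, 0). -/
noncomputable def epsP (k : Fin 3) : Zorn := (0, Pi.single k 1, 0, 0)
/-- ε_k⁻ = (0, 0, e_k, 0). -/
noncomputable def epsM (k : Fin 3) : Zorn := (0, 0, Pi.single k 1, 0)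

/-!
Both constrained coordinates of `x·y` vanish on `S × S`: the third coordinate of the `A⁺` part is
`α⁺B⁺₃ + β⁻A⁺₃ + (A⁻₁B⁻₂ − A⁻₂B⁻₁)`, and the second of the `A⁻` part is
`β⁺A⁻₂ + α⁻B⁻₂ + (A⁺₃B⁺₁ − A⁺₁B⁺₃)`. The dimension count is rank–nullity for the surjective
map `x ↦ (A⁺₃, A⁻₂)` onto `ℂ²`, whose kernel is `S`.
-/

lemma cross_apply_eq_zero_of_apply_eq_zero {A B : V3} {i j : Fin 3} (hij : i ≠ j)
    (hA : A i = 0) (hB : B i = 0) : cross A B j = 0 := by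
  fin_cases i <;> fin_cases j <;> simp_all [cross, crossProduct]

lemma inS_zmul {x y : Zorn} (hx : inS x) (hy : inS y) : inS (zmul x y) := by
  obtain ⟨hx₁, hx₂⟩ := hx
  obtain ⟨hy₁, hy₂⟩ := hy
  have hcross₁ : cross x.2.2.1 y.2.2.1 2 = 0 :=
    cross_apply_eq_zero_of_apply_eq_zero (by decide) hx₂ hy₂
  have hcross₂ : cross x.2.1 y.2.1 1 = 0 :=
    cross_apply_eq_zero_of_apply_eq_zero (by decide) hx₁ hy₁
  constructor <;> simp [zmul, hx₁, hx₂, hy₁, hy₂, hcross₁, hcross₂]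

lemma inS_zunit : inS zunit := ⟨rfl, rfl⟩

lemma zunit_zmul (x : Zorn) : zmul zunit x = x := by
  simp [zmul, zunit, cross]

lemma zmul_zunit (x : Zorn) : zmul x zunit = x := by
  simp [zmul, zunit, cross]

noncomputable def sextonionConstraints : Zorn →ₗ[ℂ] ℂ × ℂ where
  toFun x := (x.2.1 2, x.2.2.1 1)
  map_add' _ _ := rfl
  map_smul' _ _ := rfl

lemma ker_sextonionConstraints : LinearMap.ker sextonionConstraints = Ssub := by
  ext x
  simp [sextonionConstraints, Ssub, inS, Prod.ext_iff]

lemma sextonionConstraints_surjective : Function.Surjective sextonionConstraints :=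
  fun ⟨a, b⟩ => ⟨(0, fun _ => a, fun _ => b, 0), rfl⟩

lemma finrank_zorn : Module.finrank ℂ Zorn = 8 := by
  simp [Zorn, V3, Module.finrank_prod]

lemma finrank_Ssub : Module.finrank ℂ Ssub = 6 := by
  have h := LinearMap.finrank_range_add_finrank_ker sextonionConstraints
  rw [LinearMap.range_eq_top.mpr sextonionConstraints_surjective, finrank_top,
    ker_sextonionConstraints, finrank_zorn, Module.finrank_prod, Module.finrank_self] at h
  omega

/-- the sextonion subspace S is closed under the Zorn product; it
contains the unit 1 = (1,0,0,1) (which is a two-sided unit), and it is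
6-dimensional over ℂ: S is a 6-dimensional unital (non-associative) subalgebra
of Z, realizing the complex sextonions. -/
theorem sextonions_subalgebra :
    (∀ x y : Zorn, inS x → inS y → inS (zmul x y)) ∧
    inS zunit ∧
    (∀ x : Zorn, zmul zunit x = x ∧ zmul x zunit = x) ∧
    Module.finrank ℂ Ssub = 6 :=
  ⟨fun _ _ => inS_zmul, inS_zunit, fun x => ⟨zunit_zmul x, zmul_zunit x⟩, finrank_Ssub⟩
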